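/- arXiv:1810.08455 — 6 statements merged into one kernel-verified Lean document; each statement's English description precedes it below -/
import Mathlib

section
/- Let X be a real Hilbert space, g : X → X a κ-contraction with 0 ≤ κ < 1, and x_{j−2}, x_{j−1} ∈ X. Set w_{j−1} := g(x_{j−2}) − x_{j−2}, w_j := g(x_{j−1}) − x_{j−1} and e_{j−1} := x_{j−1} − x_{j−2}, and assume w_j ≠ w_{j−1}. If η ∈ ℝ minimizes the function η ↦ ‖w_{j−1} + η(w_j − w_{j−1})‖ over ℝ, then |η| · ‖e_{j−1}‖ ≤ (1 − κ)^{−1} ‖w_{j−1}‖. (This is the bound |α^j_{j−1}|‖e_{j−1}‖ ≤ (1−κ)^{−1}‖w_{j−1}‖ for the depth m = 1 Anderson optimization problem, whose constrained form minimizes ‖α_{j−2} w_{j−1} + α_{j−1} w_j‖ over α_{j−2} + α_{j−1} = 1 with α_{j−1} = η.) -/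
/-!
Write `d := w_j - w_{j-1}`. At the minimizer `η` the residual `w_{j-1} + η d` is orthogonal to `d`
(the derivative of `t ↦ ‖w_{j-1} + t d‖²` vanishes there), so by Pythagoras `|η| ‖d‖ ≤ ‖w_{j-1}‖`.
On the other hand `d = (g x_{j-1} - g x_{j-2}) - e_{j-1}`, and the contraction property gives
`‖d‖ ≥ (1 - κ) ‖e_{j-1}‖`.
-/

open scoped RealInnerProductSpace

section LineMinimizer

variable {F : Type*} [NormedAddCommGroup F] [InnerProductSpace ℝ F]

theorem real_inner_add_smul_eq_zero_of_forall_norm_le {a d : F} {η : ℝ}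
    (hmin : ∀ t : ℝ, ‖a + η • d‖ ≤ ‖a + t • d‖) : ⟪a + η • d, d⟫ = 0 := by
  have hlocal : IsLocalMin (fun t : ℝ => ‖a + t • d‖ ^ 2) η :=
    Filter.Eventually.of_forall fun t => pow_le_pow_left₀ (norm_nonneg _) (hmin t) 2
  have hderiv : HasDerivAt (fun t : ℝ => ‖a + t • d‖ ^ 2) (2 * ⟪a + η • d, d⟫) η := by
    simpa using (((hasDerivAt_id η).smul_const d).const_add a).norm_sq
  linarith [hlocal.hasDerivAt_eq_zero hderiv]

theorem abs_mul_norm_le_of_forall_norm_add_smul_le {a d : F} {η : ℝ}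
    (hmin : ∀ t : ℝ, ‖a + η • d‖ ≤ ‖a + t • d‖) : |η| * ‖d‖ ≤ ‖a‖ := by
  have horth : ⟪a + η • d, η • d⟫ = 0 := by
    rw [real_inner_smul_right, real_inner_add_smul_eq_zero_of_forall_norm_le hmin, mul_zero]
  have hpyth := norm_sub_sq_eq_norm_sq_add_norm_sq_real horth
  rw [add_sub_cancel_right] at hpyth
  rw [← Real.norm_eq_abs, ← norm_smul]
  exact (mul_self_le_mul_self_iff (norm_nonneg _) (norm_nonneg _)).mpr
    (by nlinarith [mul_self_nonneg ‖a + η • d‖])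

end LineMinimizer

theorem one_sub_mul_norm_sub_le_norm_sub_residual {E : Type*} [SeminormedAddCommGroup E]
    {g : E → E} {κ : ℝ} {x y : E} (hg : ‖g x - g y‖ ≤ κ * ‖x - y‖) :
    (1 - κ) * ‖x - y‖ ≤ ‖(g x - x) - (g y - y)‖ := by
  have hrev : ‖x - y‖ - ‖g x - g y‖ ≤ ‖(g x - x) - (g y - y)‖ := by
    rw [show (g x - x) - (g y - y) = -((x - y) - (g x - g y)) by abel, norm_neg]
    exact norm_sub_norm_le _ _
  linarith

theorem stmt_2_general {X : Type*} [NormedAddCommGroup X] [InnerProductSpace ℝ X]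
    (g : X → X) (κ : ℝ) (hκ1 : κ < 1)
    (hg : ∀ x y : X, ‖g y - g x‖ ≤ κ * ‖x - y‖)
    (xjm2 xjm1 : X)
    (wjm1 wj : X) (hwjm1 : wjm1 = g xjm2 - xjm2) (hwj : wj = g xjm1 - xjm1)
    (η : ℝ)
    (hmin : ∀ t : ℝ, ‖wjm1 + η • (wj - wjm1)‖ ≤ ‖wjm1 + t • (wj - wjm1)‖) :
    |η| * ‖xjm1 - xjm2‖ ≤ (1 - κ)⁻¹ * ‖wjm1‖ := by
  have hη : |η| * ‖wj - wjm1‖ ≤ ‖wjm1‖ := abs_mul_norm_le_of_forall_norm_add_smul_le hmin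
  have hres : (1 - κ) * ‖xjm1 - xjm2‖ ≤ ‖wj - wjm1‖ := by
    rw [hwj, hwjm1]
    refine one_sub_mul_norm_sub_le_norm_sub_residual ?_
    simpa only [norm_sub_rev xjm2] using hg xjm2 xjm1
  rw [inv_mul_eq_div, le_div_iff₀ (sub_pos.2 hκ1)]
  calc |η| * ‖xjm1 - xjm2‖ * (1 - κ) = |η| * ((1 - κ) * ‖xjm1 - xjm2‖) := by ring
    _ ≤ |η| * ‖wj - wjm1‖ := by gcongr
    _ ≤ ‖wjm1‖ := hη

/-- depth `m = 1` Anderson bound `|η| ‖e_{j-1}‖ ≤ (1-κ)⁻¹ ‖w_{j-1}‖`,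
where `η` minimizes `η ↦ ‖w_{j-1} + η (w_j - w_{j-1})‖` over `ℝ`. -/
theorem stmt_2 {X : Type*} [NormedAddCommGroup X] [InnerProductSpace ℝ X] [CompleteSpace X]
    (g : X → X) (κ : ℝ) (hκ0 : 0 ≤ κ) (hκ1 : κ < 1)
    (hg : ∀ x y : X, ‖g y - g x‖ ≤ κ * ‖x - y‖)
    (xjm2 xjm1 : X)
    (wjm1 wj : X) (hwjm1 : wjm1 = g xjm2 - xjm2) (hwj : wj = g xjm1 - xjm1)
    (hne : wj ≠ wjm1)
    (η : ℝ)
    (hmin : ∀ t : ℝ, ‖wjm1 + η • (wj - wjm1)‖ ≤ ‖wjm1 + t • (wj - wjm1)‖) :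
    |η| * ‖xjm1 - xjm2‖ ≤ (1 - κ)⁻¹ * ‖wjm1‖ :=
  stmt_2_general g κ hκ1 hg xjm2 xjm1 wjm1 wj hwjm1 hwj η hmin
end

section
/- Let X be a real Hilbert space, g : X → X a κ-contraction with 0 ≤ κ < 1, m ≥ 1, and points x_{j−m−1}, …, x_{j−1} ∈ X with residuals w_n := g(x_{n−1}) − x_{n−1} for n = j−m, …, j, all consecutive differences w_n − w_{n−1} nonzero. Suppose (α_{j−m−1}, …, α_{j−1}) ∈ ℝ^{m+1} minimizes ‖Σ_{n=j−m−1}^{j−1} α_n w_{n+1}‖ subject to Σ_n α_n = 1, and set η_n := Σ_{i=n−1}^{j−1} α_i. Then |α_{j−1}| ‖e_{j−1}‖ ≤ (1 − κ)^{−1} ( |η_{j−1}| ‖w_{j−1}‖ + Σ_{n=j−m}^{j−2} |α_{n−1}| ‖w_n‖ ), where e_{j−1} := x_{j−1} − x_{j−2} and η_{j−1} = α_{j−1} + α_{j−2}. -/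
open RealInnerProductSpace

lemma sum_Icc_split {M : Type*} [AddCommMonoid M] (a b : ℤ) (h : a ≤ b) (f : ℤ → M) :
    ∑ n ∈ Finset.Icc a b, f n = (∑ n ∈ Finset.Icc a (b - 1), f n) + f b := by
  have : Finset.Icc a b = insert b (Finset.Icc a (b - 1)) := by
    ext n; simp; omega
  rw [this, Finset.sum_insert (by simp), add_comm]

lemma sum_Icc_shift {M : Type*} [AddCommMonoid M] (a b : ℤ) (f : ℤ → M) :
    ∑ n ∈ Finset.Icc a b, f (n + 1) = ∑ k ∈ Finset.Icc (a + 1) (b + 1), f k := by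
  rw [← Finset.map_add_right_Icc a b 1, Finset.sum_map]
  rfl

/-- general-depth Anderson bound
`|α_{j-1}| ‖e_{j-1}‖ ≤ (1-κ)⁻¹ (|η_{j-1}| ‖w_{j-1}‖ + Σ_{n=j-m}^{j-2} |α_{n-1}| ‖w n‖)`. -/
theorem stmt_4 {X : Type*} [NormedAddCommGroup X] [InnerProductSpace ℝ X] [CompleteSpace X]
    (g : X → X) (κ : ℝ) (hκ0 : 0 ≤ κ) (hκ1 : κ < 1)
    (hg : ∀ x y : X, ‖g y - g x‖ ≤ κ * ‖x - y‖)
    (m : ℕ) (hm : 1 ≤ m) (j : ℤ)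
    (x : ℤ → X) (w : ℤ → X)
    (hw : ∀ n, w n = g (x (n - 1)) - x (n - 1))
    (hwne : ∀ n ∈ Finset.Icc (j - (m : ℤ) + 1) j, w n ≠ w (n - 1))
    (α : ℤ → ℝ)
    (hsum : ∑ n ∈ Finset.Icc (j - (m : ℤ) - 1) (j - 1), α n = 1)
    (hmin : ∀ b : ℤ → ℝ, ∑ n ∈ Finset.Icc (j - (m : ℤ) - 1) (j - 1), b n = 1 →
      ‖∑ n ∈ Finset.Icc (j - (m : ℤ) - 1) (j - 1), α n • w (n + 1)‖ ≤
      ‖∑ n ∈ Finset.Icc (j - (m : ℤ) - 1) (j - 1), b n • w (n + 1)‖)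
    (η : ℤ → ℝ) (hη : ∀ n, η n = ∑ i ∈ Finset.Icc (n - 1) (j - 1), α i) :
    |α (j - 1)| * ‖x (j - 1) - x (j - 2)‖ ≤
      (1 - κ)⁻¹ * (|η (j - 1)| * ‖w (j - 1)‖ +
        ∑ n ∈ Finset.Icc (j - (m : ℤ)) (j - 2), |α (n - 1)| * ‖w n‖) := by
  have hm' : (1 : ℤ) ≤ (m : ℤ) := by exact_mod_cast hm
  set I := Finset.Icc (j - (m : ℤ) - 1) (j - 1) with hI
  set S := ∑ n ∈ I, α n • w (n + 1) with hS
  set v := w j - w (j - 1) with hv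
  have hvne : v ≠ 0 := sub_ne_zero_of_ne (hwne j (by simp; omega))
  have hvpos : 0 < ‖v‖ := norm_pos_iff.mpr hvne
  -- Step A: orthogonality
  have horth : ⟪S, v⟫ = 0 := by
    set c : ℝ := ⟪S, v⟫ with hc
    set t : ℝ := -c / ‖v‖ ^ 2 with ht
    set b : ℤ → ℝ := fun n =>
      α n + (if n = j - 1 then t else 0) - (if n = j - 2 then t else 0) with hb
    have hj1 : j - 1 ∈ I := by simp only [hI, Finset.mem_Icc]; omega
    have hj2 : j - 2 ∈ I := by simp only [hI, Finset.mem_Icc]; omega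
    have hbsum : ∑ n ∈ I, b n = 1 := by
      simp only [hb, Finset.sum_sub_distrib, Finset.sum_add_distrib, hsum, ← hI,
        Finset.sum_ite_eq' I, hj1, hj2, if_true]
      ring
    have hbS : ∑ n ∈ I, b n • w (n + 1) = S + t • v := by
      simp only [hb, add_smul, sub_smul, Finset.sum_sub_distrib, Finset.sum_add_distrib, ← hS,
        ite_smul, zero_smul]
      rw [Finset.sum_ite_eq' I (j-1) (fun n => t • w (n+1)),
        Finset.sum_ite_eq' I (j-2) (fun n => t • w (n+1)), if_pos hj1, if_pos hj2]
      simp only [show j - 1 + 1 = j from by ring, show j - 2 + 1 = j - 1 from by ring, hv]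
      rw [smul_sub]; abel
    have key := hmin b hbsum
    rw [hbS] at key
    have h1 : ‖S‖ ^ 2 ≤ ‖S + t • v‖ ^ 2 := by
      apply pow_le_pow_left₀ (norm_nonneg _) key
    have h2 : ‖S + t • v‖ ^ 2 = ‖S‖ ^ 2 + 2 * (t * c) + t ^ 2 * ‖v‖ ^ 2 := by
      rw [norm_add_sq_real, real_inner_smul_right, norm_smul, ← hc]
      rw [mul_pow]
      simp [sq_abs]
    have hv2 : (0 : ℝ) < ‖v‖ ^ 2 := by positivity
    have h3 : 0 ≤ 2 * (t * c) + t ^ 2 * ‖v‖ ^ 2 := by linarith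
    rw [ht] at h3
    have h4 : 2 * (-c / ‖v‖ ^ 2 * c) + (-c / ‖v‖ ^ 2) ^ 2 * ‖v‖ ^ 2 = -(c ^ 2 / ‖v‖ ^ 2) := by
      field_simp
      ring
    rw [h4] at h3
    have h5 : c ^ 2 / ‖v‖ ^ 2 ≤ 0 := by linarith
    have hcle : c ^ 2 ≤ 0 := by
      by_contra hpos
      push_neg at hpos
      have : 0 < c ^ 2 / ‖v‖ ^ 2 := div_pos hpos hv2
      linarith
    have c2 : c ^ 2 = 0 := le_antisymm hcle (sq_nonneg c)
    exact pow_eq_zero_iff two_ne_zero |>.mp c2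
  -- Step B: algebraic identity
  have hη1 : η (j - 1) = α (j - 2) + α (j - 1) := by
    rw [hη, sum_Icc_split (j - 1 - 1) (j - 1) (by omega)]
    have e : j - 1 - 1 = j - 2 := by ring
    rw [e, Finset.Icc_self, Finset.sum_singleton]
  have hshift : ∑ k ∈ Finset.Icc (j - (m : ℤ)) (j - 2), α (k - 1) • w k
      = ∑ n ∈ Finset.Icc (j - (m : ℤ) - 1) (j - 2 - 1), α n • w (n + 1) := by
    rw [show j - (m : ℤ) = (j - (m : ℤ) - 1) + 1 by ring, show j - 2 = (j - 2 - 1) + 1 by ring,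
      ← sum_Icc_shift (j - (m : ℤ) - 1) (j - 2 - 1) (fun k => α (k - 1) • w k)]
    simp
  have hsplit : S = (∑ k ∈ Finset.Icc (j - (m : ℤ)) (j - 2), α (k - 1) • w k)
      + α (j - 2) • w (j - 1) + α (j - 1) • w j := by
    rw [hS, hI, sum_Icc_split _ _ (by omega) (fun n => α n • w (n + 1)),
      sum_Icc_split _ _ (by omega) (fun n => α n • w (n + 1)), hshift]
    simp only [show j - 1 - 1 = j - 2 from by ring, show j - 2 + 1 = j - 1 from by ring,
      show j - 1 + 1 = j from by ring]
  have hkey : α (j - 1) • v =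
      S - (∑ k ∈ Finset.Icc (j - (m : ℤ)) (j - 2), α (k - 1) • w k) - η (j - 1) • w (j - 1) := by
    rw [hsplit, hη1, hv, add_smul, smul_sub]
    abel
  -- Step C
  set R : ℝ := |η (j - 1)| * ‖w (j - 1)‖ +
      ∑ n ∈ Finset.Icc (j - (m : ℤ)) (j - 2), |α (n - 1)| * ‖w n‖ with hR
  have hC : |α (j - 1)| * ‖v‖ ≤ R := by
    set T : X := (∑ k ∈ Finset.Icc (j - (m : ℤ)) (j - 2), α (k - 1) • w k)
      + η (j - 1) • w (j - 1) with hT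
    have hTnorm : ‖T‖ ≤ R := by
      rw [hT, hR]
      refine le_trans (norm_add_le _ _) ?_
      rw [add_comm]
      gcongr
      · rw [norm_smul, Real.norm_eq_abs]
      · refine le_trans (norm_sum_le _ _) ?_
        apply Finset.sum_le_sum
        intro i _
        rw [norm_smul, Real.norm_eq_abs]
    have hinner : α (j - 1) * ‖v‖ ^ 2 = -⟪T, v⟫ := by
      have : ⟪α (j - 1) • v, v⟫ = α (j - 1) * ‖v‖ ^ 2 := by
        rw [real_inner_smul_left, real_inner_self_eq_norm_sq]
      rw [← this, hkey, hT]
      rw [inner_sub_left, inner_sub_left, horth, inner_add_left]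
      ring
    have habs : |α (j - 1)| * ‖v‖ ^ 2 ≤ ‖T‖ * ‖v‖ := by
      calc |α (j - 1)| * ‖v‖ ^ 2 = |α (j - 1) * ‖v‖ ^ 2| := by
            rw [abs_mul, abs_of_nonneg (by positivity : (0:ℝ) ≤ ‖v‖ ^ 2)]
        _ = |⟪T, v⟫| := by rw [hinner, abs_neg]
        _ ≤ ‖T‖ * ‖v‖ := abs_real_inner_le_norm _ _
    have : |α (j - 1)| * ‖v‖ * ‖v‖ ≤ R * ‖v‖ := by
      nlinarith [hTnorm, habs, norm_nonneg v]
    exact le_of_mul_le_mul_right this hvpos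
  -- Step D
  have hD : (1 - κ) * ‖x (j - 1) - x (j - 2)‖ ≤ ‖v‖ := by
    have h1 : ‖g (x (j - 2)) - g (x (j - 1))‖ ≤ κ * ‖x (j - 1) - x (j - 2)‖ :=
      hg (x (j - 1)) (x (j - 2))
    have h2 : x (j - 1) - x (j - 2) = (g (x (j - 1)) - g (x (j - 2))) - v := by
      rw [hv, hw j, hw (j - 1)]
      have : j - 1 - 1 = j - 2 := by ring
      rw [this]
      abel
    have h3 : ‖x (j - 1) - x (j - 2)‖ ≤ κ * ‖x (j - 1) - x (j - 2)‖ + ‖v‖ := by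
      calc ‖x (j - 1) - x (j - 2)‖ = ‖(g (x (j - 1)) - g (x (j - 2))) - v‖ := by rw [← h2]
        _ ≤ ‖g (x (j - 1)) - g (x (j - 2))‖ + ‖v‖ := norm_sub_le _ _
        _ ≤ κ * ‖x (j - 1) - x (j - 2)‖ + ‖v‖ := by
            rw [norm_sub_rev]; linarith
    linarith
  -- Step E
  have h1κ : 0 < 1 - κ := by linarith
  rw [inv_mul_eq_div, le_div_iff₀ h1κ]
  nlinarith [hC, hD, abs_nonneg (α (j - 1)), norm_nonneg (x (j - 1) - x (j - 2)), norm_nonneg v]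
end

section
/- Let X be a real Hilbert space, g : X → X a κ-contraction with 0 ≤ κ < 1, m ≥ 1, and points x_{j−m−1}, …, x_{j−1} ∈ X with residuals w_n := g(x_{n−1}) − x_{n−1} for n = j−m, …, j, all consecutive differences w_n − w_{n−1} nonzero. Suppose (α_{j−m−1}, …, α_{j−1}) ∈ ℝ^{m+1} minimizes ‖Σ_{n=j−m−1}^{j−1} α_n w_{n+1}‖ subject to Σ_n α_n = 1, and set η_n := Σ_{i=n−1}^{j−1} α_i. Then |1 − α_{j−m−1}| ‖e_{j−m}‖ ≤ (1 − κ)^{−1} ( Σ_{n=j−m+2}^{j} |α_{n−1}| ‖w_n‖ + |η_{j−m+2}| ‖w_{j−m+1}‖ + ‖w_{j−m}‖ ), where e_{j−m} := x_{j−m} − x_{j−m−1}. -/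
/-!
Write `s = j - m - 1`, `S = ∑ α_n w_{n+1}` and `η_n = ∑_{i ≥ n-1} α_i`, so that `1 - α_s = η_{s+2}`.
Regrouping `S` with `∑ α_n = 1` gives
`η_{s+2} (w_{s+2} - w_{s+1}) = η_{s+3} w_{s+2} - ∑_{n ≥ s+2} α_n w_{n+1} - (w_{s+1} - S)`.
Being the minimal-norm point of the affine hull of the residuals, `S` is orthogonal to
`w_{s+1} - S`, hence `‖w_{s+1} - S‖ ≤ ‖w_{s+1}‖`; and the contraction property gives
`(1 - κ) ‖x_{s+1} - x_s‖ ≤ ‖w_{s+2} - w_{s+1}‖`.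
-/

open Finset

section Minimizer

variable {X : Type*} [NormedAddCommGroup X] [InnerProductSpace ℝ X]

theorem real_inner_eq_zero_of_forall_norm_le_norm_add_smul {u v : X}
    (h : ∀ t : ℝ, ‖u‖ ≤ ‖u + t • v‖) : inner ℝ u v = 0 := by
  have hmin : IsLocalMin (fun t : ℝ ↦ ‖u + t • v‖ ^ 2) 0 :=
    Filter.Eventually.of_forall fun t ↦ by
      simpa using pow_le_pow_left₀ (norm_nonneg u) (h t) 2
  have hderiv : HasDerivAt (fun t : ℝ ↦ ‖u + t • v‖ ^ 2) (2 * inner ℝ (u + (0 : ℝ) • v) v) 0 :=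
    (((hasDerivAt_id (0 : ℝ)).smul_const v).const_add u).norm_sq.congr_deriv (by simp)
  simpa using hmin.hasDerivAt_eq_zero hderiv

theorem norm_sub_sum_smul_le_norm_of_isMinOn {ι : Type*} [DecidableEq ι] {s : Finset ι}
    {v : ι → X} {α : ι → ℝ} (hα : ∑ i ∈ s, α i = 1)
    (hmin : IsMinOn (fun b : ι → ℝ ↦ ‖∑ i ∈ s, b i • v i‖) {b | ∑ i ∈ s, b i = 1} α)
    {k : ι} (hk : k ∈ s) : ‖v k - ∑ i ∈ s, α i • v i‖ ≤ ‖v k‖ := by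
  set S := ∑ i ∈ s, α i • v i
  have horth : inner ℝ S (v k - S) = 0 := by
    refine real_inner_eq_zero_of_forall_norm_le_norm_add_smul fun t ↦ ?_
    let b : ι → ℝ := fun i ↦ α i + t * ((if i = k then 1 else 0) - α i)
    have hb : ∑ i ∈ s, b i = 1 := by
      simp [b, sum_add_distrib, ← mul_sum, sum_sub_distrib, hk, hα]
    have hbv : ∑ i ∈ s, b i • v i = S + t • (v k - S) := by
      simp [b, add_smul, sub_smul, mul_smul, ite_smul, sum_add_distrib, ← smul_sum,
        sum_sub_distrib, hk, S]
    simpa [hbv] using isMinOn_iff.mp hmin b hb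
  have hpyth := norm_add_sq_eq_norm_sq_add_norm_sq_real horth
  rw [add_sub_cancel] at hpyth
  rw [mul_self_le_mul_self_iff (norm_nonneg _) (norm_nonneg _)]
  nlinarith [mul_self_nonneg ‖S‖]

end Minimizer

theorem one_sub_mul_norm_sub_le_norm_sub_sub {X : Type*} [SeminormedAddCommGroup X] {g : X → X}
    {κ : ℝ} (hg : ∀ x y : X, ‖g y - g x‖ ≤ κ * ‖x - y‖) (x y : X) :
    (1 - κ) * ‖y - x‖ ≤ ‖(g y - y) - (g x - x)‖ := by
  have htri := norm_sub_le (g y - g x) ((g y - y) - (g x - x))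
  rw [show g y - g x - ((g y - y) - (g x - x)) = y - x by abel] at htri
  have hcontr := hg x y
  rw [norm_sub_rev x y] at hcontr
  linarith

theorem Int.sum_Icc_eq_add_sum_Icc_add_one {M : Type*} [AddCommMonoid M] {f : ℤ → M} {a b : ℤ}
    (h : a ≤ b) : ∑ n ∈ Icc a b, f n = f a + ∑ n ∈ Icc (a + 1) b, f n := by
  rw [Icc_add_one_left_eq_Ioc, add_sum_Ioc_eq_sum_Icc h]

theorem Int.sum_Icc_eq_add_add_sum_Icc_add_two {M : Type*} [AddCommMonoid M] {f : ℤ → M}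
    {a b : ℤ} (h : a < b) : ∑ n ∈ Icc a b, f n = f a + (f (a + 1) + ∑ n ∈ Icc (a + 2) b, f n) := by
  rw [Int.sum_Icc_eq_add_sum_Icc_add_one h.le, Int.sum_Icc_eq_add_sum_Icc_add_one h, add_assoc a]
  rfl

section Splitting

variable {X : Type*} [SeminormedAddCommGroup X] [NormedSpace ℝ X] (v : ℤ → X) (α : ℤ → ℝ)
  {s N : ℤ}

theorem sum_Icc_smul_sub_sub_eq (hsN : s < N) (hα : ∑ n ∈ Icc s N, α n = 1) :
    (∑ n ∈ Icc (s + 1) N, α n) • (v (s + 1) - v s) =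
      (∑ n ∈ Icc (s + 2) N, α n) • v (s + 1) - ∑ n ∈ Icc (s + 2) N, α n • v n -
        (v s - ∑ n ∈ Icc s N, α n • v n) := by
  rw [Int.sum_Icc_eq_add_add_sum_Icc_add_two hsN] at hα ⊢
  rw [Int.sum_Icc_eq_add_sum_Icc_add_one hsN, show s + 1 + 1 = s + 2 by ring]
  linear_combination (norm := module) -(hα • v s)

theorem abs_sum_Icc_mul_norm_sub_le (hsN : s < N) (hα : ∑ n ∈ Icc s N, α n = 1) :
    |∑ n ∈ Icc (s + 1) N, α n| * ‖v (s + 1) - v s‖ ≤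
      ‖v s - ∑ n ∈ Icc s N, α n • v n‖ + |∑ n ∈ Icc (s + 2) N, α n| * ‖v (s + 1)‖ +
        ∑ n ∈ Icc (s + 2) N, |α n| * ‖v n‖ := by
  rw [← Real.norm_eq_abs, ← norm_smul, sum_Icc_smul_sub_sub_eq v α hsN hα]
  set a := (∑ n ∈ Icc (s + 2) N, α n) • v (s + 1)
  set T := ∑ n ∈ Icc (s + 2) N, α n • v n
  set r := v s - ∑ n ∈ Icc s N, α n • v n
  have hT : ‖T‖ ≤ ∑ n ∈ Icc (s + 2) N, |α n| * ‖v n‖ :=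
    norm_sum_le_of_le _ fun n _ ↦ by rw [norm_smul, Real.norm_eq_abs]
  calc ‖a - T - r‖ ≤ ‖r‖ + ‖a‖ + ‖T‖ := by linarith [norm_sub_le (a - T) r, norm_sub_le a T]
    _ ≤ _ := by rw [norm_smul, Real.norm_eq_abs]; gcongr

end Splitting

theorem stmt_5_general {X : Type*} [NormedAddCommGroup X] [InnerProductSpace ℝ X]
    (g : X → X) (κ : ℝ) (hκ1 : κ < 1)
    (hg : ∀ x y : X, ‖g y - g x‖ ≤ κ * ‖x - y‖)
    (m : ℕ) (hm : 1 ≤ m) (j : ℤ)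
    (x : ℤ → X) (w : ℤ → X)
    (hw : ∀ n, w n = g (x (n - 1)) - x (n - 1))
    (α : ℤ → ℝ)
    (hsum : ∑ n ∈ Finset.Icc (j - (m : ℤ) - 1) (j - 1), α n = 1)
    (hmin : ∀ b : ℤ → ℝ, ∑ n ∈ Finset.Icc (j - (m : ℤ) - 1) (j - 1), b n = 1 →
      ‖∑ n ∈ Finset.Icc (j - (m : ℤ) - 1) (j - 1), α n • w (n + 1)‖ ≤
      ‖∑ n ∈ Finset.Icc (j - (m : ℤ) - 1) (j - 1), b n • w (n + 1)‖)
    (η : ℤ → ℝ) (hη : ∀ n, η n = ∑ i ∈ Finset.Icc (n - 1) (j - 1), α i) :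
    |1 - α (j - (m : ℤ) - 1)| * ‖x (j - (m : ℤ)) - x (j - (m : ℤ) - 1)‖ ≤
      (1 - κ)⁻¹ * ((∑ n ∈ Finset.Icc (j - (m : ℤ) + 2) j, |α (n - 1)| * ‖w n‖) +
        |η (j - (m : ℤ) + 2)| * ‖w (j - (m : ℤ) + 1)‖ + ‖w (j - (m : ℤ))‖) := by
  set s := j - (m : ℤ) - 1
  have hsN : s < j - 1 := by omega
  rw [show j - (m : ℤ) + 2 = s + 3 by omega, show j - (m : ℤ) + 1 = s + 2 by omega,
    show j - (m : ℤ) = s + 1 by omega]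
  have hα : 1 - α s = ∑ n ∈ Icc (s + 1) (j - 1), α n := by
    rw [← hsum, Int.sum_Icc_eq_add_sum_Icc_add_one hsN.le, add_sub_cancel_left]
  have hη₃ : η (s + 3) = ∑ n ∈ Icc (s + 2) (j - 1), α n := by
    rw [hη, show s + 3 - 1 = s + 2 by ring]
  have htail : ∑ n ∈ Icc (s + 3) j, |α (n - 1)| * ‖w n‖ =
      ∑ n ∈ Icc (s + 2) (j - 1), |α n| * ‖w (n + 1)‖ := by
    rw [show Icc (s + 3) j = (Icc (s + 2) (j - 1)).map (addRightEmbedding 1) by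
      rw [map_add_right_Icc, sub_add_cancel, add_assoc]; rfl, sum_map]
    simp
  have hcontr : (1 - κ) * ‖x (s + 1) - x s‖ ≤ ‖w (s + 2) - w (s + 1)‖ := by
    rw [hw, hw, add_sub_cancel_right, show s + 2 - 1 = s + 1 by ring]
    exact one_sub_mul_norm_sub_le_norm_sub_sub hg _ _
  have hproj := norm_sub_sum_smul_le_norm_of_isMinOn (v := fun n ↦ w (n + 1))
    hsum (isMinOn_iff.mpr hmin) (k := s) (left_mem_Icc.mpr hsN.le)
  have hsplit := abs_sum_Icc_mul_norm_sub_le (fun n ↦ w (n + 1)) α hsN hsum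
  simp only [show s + 1 + 1 = s + 2 by ring] at hproj hsplit
  rw [hα, hη₃, htail, le_inv_mul_iff₀ (by linarith)]
  calc (1 - κ) * (|∑ n ∈ Icc (s + 1) (j - 1), α n| * ‖x (s + 1) - x s‖)
      = |∑ n ∈ Icc (s + 1) (j - 1), α n| * ((1 - κ) * ‖x (s + 1) - x s‖) := by ring
    _ ≤ |∑ n ∈ Icc (s + 1) (j - 1), α n| * ‖w (s + 2) - w (s + 1)‖ := by gcongr
    _ ≤ _ := by linarith

/-- general-depth Anderson bound
`|1 - α_{j-m-1}| ‖e_{j-m}‖ ≤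
  (1-κ)⁻¹ (Σ_{n=j-m+2}^{j} |α_{n-1}| ‖w_n‖ + |η_{j-m+2}| ‖w_{j-m+1}‖ + ‖w_{j-m}‖)`. -/
theorem stmt_5 {X : Type*} [NormedAddCommGroup X] [InnerProductSpace ℝ X] [CompleteSpace X]
    (g : X → X) (κ : ℝ) (hκ0 : 0 ≤ κ) (hκ1 : κ < 1)
    (hg : ∀ x y : X, ‖g y - g x‖ ≤ κ * ‖x - y‖)
    (m : ℕ) (hm : 1 ≤ m) (j : ℤ)
    (x : ℤ → X) (w : ℤ → X)
    (hw : ∀ n, w n = g (x (n - 1)) - x (n - 1))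
    (hwne : ∀ n ∈ Finset.Icc (j - (m : ℤ) + 1) j, w n ≠ w (n - 1))
    (α : ℤ → ℝ)
    (hsum : ∑ n ∈ Finset.Icc (j - (m : ℤ) - 1) (j - 1), α n = 1)
    (hmin : ∀ b : ℤ → ℝ, ∑ n ∈ Finset.Icc (j - (m : ℤ) - 1) (j - 1), b n = 1 →
      ‖∑ n ∈ Finset.Icc (j - (m : ℤ) - 1) (j - 1), α n • w (n + 1)‖ ≤
      ‖∑ n ∈ Finset.Icc (j - (m : ℤ) - 1) (j - 1), b n • w (n + 1)‖)
    (η : ℤ → ℝ) (hη : ∀ n, η n = ∑ i ∈ Finset.Icc (n - 1) (j - 1), α i) :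
    |1 - α (j - (m : ℤ) - 1)| * ‖x (j - (m : ℤ)) - x (j - (m : ℤ) - 1)‖ ≤
      (1 - κ)⁻¹ * ((∑ n ∈ Finset.Icc (j - (m : ℤ) + 2) j, |α (n - 1)| * ‖w n‖) +
        |η (j - (m : ℤ) + 2)| * ‖w (j - (m : ℤ) + 1)‖ + ‖w (j - (m : ℤ))‖) :=
  stmt_5_general g κ hκ1 hg m hm j x w hw α hsum hmin η hη
end

section
/- Let X be a real vector space, g : X → X any map, m ≥ 0, points x_{k−m−1}, …, x_{k−1} ∈ X, real numbers α_{k−m−1}, …, α_{k−1} with Σ_{j=k−m−1}^{k−1} α_j = 1, and β ∈ ℝ. Define x^α_{k−1} := Σ_j α_j x_j, x̃^α_k := Σ_j α_j g(x_j), w^α_k := Σ_j α_j (g(x_j) − x_j), γ_j := Σ_{n=k−m−1}^{j−1} α_n, and set x_k := (1 − β) x^α_{k−1} + β x̃^α_k and w_{k+1} := g(x_k) − x_k. Then w_{k+1} = (1 − β) w^α_k + Σ_{j=k−m}^{k} γ_j ( g(x_j) − g(x_{j−1}) ). -/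
private lemma tele_aux {X : Type*} [AddCommGroup X] (f : ℤ → X) (a : ℤ) :
    ∀ n : ℕ, ∑ j ∈ Finset.Icc a (a + n), (f j - f (j - 1)) = f (a + n) - f (a - 1) := by
  intro n
  induction n with
  | zero => simp
  | succ n ih =>
    have hins : Finset.Icc a (a + (n + 1 : ℕ)) =
        insert (a + (n : ℕ) + 1) (Finset.Icc a (a + n)) := by
      ext i; simp [Finset.mem_Icc]; omega
    have hnm : (a + (n : ℕ) + 1) ∉ Finset.Icc a (a + (n : ℕ)) := by
      simp [Finset.mem_Icc]
    rw [hins, Finset.sum_insert hnm, ih]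
    have h2 : (a + (n : ℕ) + 1 - 1) = a + (n : ℕ) := by ring
    have h3 : (a + ((n + 1 : ℕ) : ℤ)) = a + (n : ℕ) + 1 := by push_cast; ring
    rw [h2, h3]
    abel

/-- for the damped Anderson update `x_k = (1-β) x^α_{k-1} + β x̃^α_k`,
the next residual satisfies
`w_{k+1} = (1-β) w^α_k + Σ_{j=k-m}^{k} γ_j (g(x_j) - g(x_{j-1}))`. -/
theorem stmt_11 {X : Type*} [AddCommGroup X] [Module ℝ X]
    (g : X → X) (m : ℕ) (k : ℤ)
    (x : ℤ → X) (α : ℤ → ℝ) (β : ℝ)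
    (hsum : ∑ j ∈ Finset.Icc (k - (m : ℤ) - 1) (k - 1), α j = 1)
    (xa xta wa : X)
    (hxa : xa = ∑ j ∈ Finset.Icc (k - (m : ℤ) - 1) (k - 1), α j • x j)
    (hxta : xta = ∑ j ∈ Finset.Icc (k - (m : ℤ) - 1) (k - 1), α j • g (x j))
    (hwa : wa = ∑ j ∈ Finset.Icc (k - (m : ℤ) - 1) (k - 1), α j • (g (x j) - x j))
    (γ : ℤ → ℝ) (hγ : ∀ j, γ j = ∑ n ∈ Finset.Icc (k - (m : ℤ) - 1) (j - 1), α n)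
    (hxk : x k = (1 - β) • xa + β • xta)
    (wk1 : X) (hwk1 : wk1 = g (x k) - x k) :
    wk1 = (1 - β) • wa + ∑ j ∈ Finset.Icc (k - (m : ℤ)) k, γ j • (g (x j) - g (x (j - 1))) := by
  set G : ℤ → X := fun j => g (x j) with hG
  -- wa = xta - xa
  have hwa' : wa = xta - xa := by
    rw [hwa, hxta, hxa, ← Finset.sum_sub_distrib]
    exact Finset.sum_congr rfl fun j _ => smul_sub _ _ _
  -- γ at the endpoints
  have hγk : γ k = 1 := by rw [hγ]; exact hsum
  have hγ0 : γ (k - (m : ℤ) - 1) = 0 := by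
    rw [hγ]
    rw [Finset.Icc_eq_empty (by omega)]
    simp
  -- γ step : for j with k - m ≤ j, γ j - γ (j-1) = α (j-1)
  have hstep : ∀ j ∈ Finset.Icc (k - (m : ℤ)) k, γ j - γ (j - 1) = α (j - 1) := by
    intro j hj
    rw [Finset.mem_Icc] at hj
    rw [hγ j, hγ (j - 1)]
    have hins : Finset.Icc (k - (m : ℤ) - 1) (j - 1) =
        insert (j - 1) (Finset.Icc (k - (m : ℤ) - 1) (j - 1 - 1)) := by
      ext i; simp [Finset.mem_Icc]; omega
    have hnm : (j - 1) ∉ Finset.Icc (k - (m : ℤ) - 1) (j - 1 - 1) := by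
      simp [Finset.mem_Icc]
    rw [hins, Finset.sum_insert hnm]
    ring
  -- split the main sum
  have hsplit : ∀ j : ℤ, γ j • (G j - G (j - 1)) =
      ((fun i => γ i • G i) j - (fun i => γ i • G i) (j - 1))
        - (γ j - γ (j - 1)) • G (j - 1) := by
    intro j
    simp only [smul_sub, sub_smul]
    abel
  have htele : ∑ j ∈ Finset.Icc (k - (m : ℤ)) k,
      ((fun i => γ i • G i) j - (fun i => γ i • G i) (j - 1)) = G k := by
    have h1 : Finset.Icc (k - (m : ℤ)) k = Finset.Icc (k - (m : ℤ)) (k - (m : ℤ) + m) := by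
      congr 1; ring
    rw [h1, tele_aux (fun i => γ i • G i) (k - (m : ℤ)) m]
    have h2 : k - (m : ℤ) + m = k := by ring
    rw [h2, hγk, hγ0, one_smul, zero_smul, sub_zero]
  -- the α-sum equals xta after reindexing
  have hre : ∑ j ∈ Finset.Icc (k - (m : ℤ)) k, (γ j - γ (j - 1)) • G (j - 1) = xta := by
    rw [Finset.sum_congr rfl fun j hj => by rw [hstep j hj]]
    rw [hxta]
    apply Finset.sum_nbij' (fun j => j - 1) (fun j => j + 1)
    · intro a ha; rw [Finset.mem_Icc] at *; omega
    · intro a ha; rw [Finset.mem_Icc] at *; omega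
    · intro a _; omega
    · intro a _; omega
    · intro a _; rfl
  calc wk1 = g (x k) - x k := hwk1
    _ = (1 - β) • wa + (G k - xta) := by
        rw [hwa', show g (x k) = G k from rfl, hxk]; module
    _ = (1 - β) • wa + ∑ j ∈ Finset.Icc (k - (m : ℤ)) k, γ j • (G j - G (j - 1)) := by
        rw [Finset.sum_congr rfl fun j _ => hsplit j, Finset.sum_sub_distrib, htele, hre]
end

section
/- Let X be a real Hilbert space and g : X → X be twice continuously Fréchet differentiable with ‖g′(y; u)‖ ≤ κ‖u‖ and ‖g″(y; u, v)‖ ≤ κ̂‖u‖‖v‖ for all y, u, v ∈ X, where κ, κ̂ > 0. Let x_{k−3}, x_{k−2}, x_{k−1} ∈ X with residuals w_{k−2} := g(x_{k−3}) − x_{k−3}, w_{k−1} := g(x_{k−2}) − x_{k−2}, w_k := g(x_{k−1}) − x_{k−1}, w_k ≠ 0. Suppose (α_{k−3}, α_{k−2}, α_{k−1}) minimizes ‖α_{k−3} w_{k−2} + α_{k−2} w_{k−1} + α_{k−1} w_k‖ subject to α_{k−3} + α_{k−2} + α_{k−1} = 1, set γ_{k−2} := α_{k−3}, γ_{k−1}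 := α_{k−3} + α_{k−2} = 1 − α_{k−1}, w^α_k := α_{k−3} w_{k−2} + α_{k−2} w_{k−1} + α_{k−1} w_k, θ_k := ‖w^α_k‖/‖w_k‖. For 0 < β ≤ 1 set x_k := (1 − β) Σ_{j=k−3}^{k−1} α_j x_j + β Σ_{j=k−3}^{k−1} α_j g(x_j), and define w_{k+1} := g(x_k) − x_k, e_j := x_j − x_{j−1}. Then ‖w_{k+1}‖ ≤ θ_k ( (1 − β) + κβ ) ‖w_k‖ + κ̂ ( ‖e_k‖ + ‖e_{k−1}‖ ) |γ_{k−1}| ‖e_{k−1}‖ + κ̂ ( ‖e_{k−2}‖ + 2‖e_{k−1}‖ + ‖e_k‖ ) |γ_{k−2}| ‖e_{k−2}‖. -/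
/-!
With `e₀ = x_k - x_{k-1}`, `e₁ = x_{k-1} - x_{k-2}`, `e₂ = x_{k-2} - x_{k-3}` and
`α_{k-2} = 1 - α_{k-3} - α_{k-1}` eliminated, the step reads `e₀ = β w^α_k - γ_{k-1} e₁ - γ_{k-2} e₂`
and `w_{k+1} = (1 - β) w^α_k + D` with
`D = (g x_k - g x_{k-1}) + γ_{k-1} (g x_{k-1} - g x_{k-2}) + γ_{k-2} (g x_{k-2} - g x_{k-3})`.
Move along the three segments `[x_{j-1}, x_j]` with a common parameter and apply the mean value
inequality to the weighted sum: its derivative is `A e₀ + γ_{k-1} B e₁ + γ_{k-2} C e₂`, with `A, B, C`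
the derivatives of `g` at the three moving points. Substituting `e₀` gives
`β A w^α_k + γ_{k-1} (B - A) e₁ + γ_{k-2} (C - A) e₂`; the first term is at most `κ β ‖w^α_k‖`, and
the others are second order because `g'` is `κ̂`-Lipschitz and the moving points stay within
`‖e₀‖ + ‖e₁‖`, resp. `‖e₀‖ + 2‖e₁‖ + ‖e₂‖`, of each other.
-/

open Set AffineMap

section

variable {E F : Type*} [NormedAddCommGroup E] [NormedSpace ℝ E]
  [NormedAddCommGroup F] [NormedSpace ℝ F]

theorem norm_lineMap_sub_lineMap_le (a b c d : E) {t : ℝ} (ht : t ∈ Icc (0 : ℝ) 1) :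
    ‖lineMap a b t - lineMap c d t‖ ≤ ‖a - c‖ + ‖b - d‖ := by
  have h : lineMap a b t - lineMap c d t = (1 - t) • (a - c) + t • (b - d) := by
    simp only [lineMap_apply_module]
    module
  rw [h]
  refine (norm_add_le _ _).trans ?_
  rw [norm_smul, norm_smul, Real.norm_of_nonneg (by linarith [ht.2]), Real.norm_of_nonneg ht.1]
  nlinarith [ht.1, ht.2, norm_nonneg (a - c), norm_nonneg (b - d)]

theorem norm_fderiv_sub_le_of_norm_fderiv_fderiv_le {g : E → F} (hg : ContDiff ℝ 2 g)
    {K : ℝ} (hK : 0 ≤ K) (hg₂ : ∀ y u v : E, ‖fderiv ℝ (fderiv ℝ g) y u v‖ ≤ K * ‖u‖ * ‖v‖)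
    (a b : E) : ‖fderiv ℝ g a - fderiv ℝ g b‖ ≤ K * ‖a - b‖ :=
  convex_univ.norm_image_sub_le_of_norm_fderiv_le
    (fun _ _ => ((hg.fderiv_right (m := 1) le_rfl).differentiable one_ne_zero).differentiableAt)
    (fun y _ => ContinuousLinearMap.opNorm_le_bound₂ _ hK (hg₂ y)) (mem_univ b) (mem_univ a)

theorem norm_sum_smul_sub_le_of_norm_fderiv_le {ι : Type*} (s : Finset ι) {g : E → F}
    (hg : Differentiable ℝ g) (c : ι → ℝ) (x y : ι → E) {M : ℝ}
    (hM : ∀ t ∈ Icc (0 : ℝ) 1,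
      ‖∑ i ∈ s, c i • fderiv ℝ g (lineMap (x i) (y i) t) (y i - x i)‖ ≤ M) :
    ‖∑ i ∈ s, c i • (g (y i) - g (x i))‖ ≤ M := by
  have hderiv : ∀ t : ℝ, HasDerivAt (fun t => ∑ i ∈ s, c i • g (lineMap (x i) (y i) t))
      (∑ i ∈ s, c i • fderiv ℝ g (lineMap (x i) (y i) t) (y i - x i)) t := fun t =>
    HasDerivAt.fun_sum fun i _ =>
      ((hg _).hasFDerivAt.comp_hasDerivAt t hasDerivAt_lineMap).const_smul (c i)
  simpa [← Finset.sum_sub_distrib, ← smul_sub] using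
    norm_image_sub_le_of_norm_deriv_le_segment_01' (fun t _ => (hderiv t).hasDerivWithinAt)
      (fun t ht => hM t (Ico_subset_Icc_self ht))

theorem norm_apply_add_smul_apply_add_smul_apply_le (A B C : E →L[ℝ] F) {e w u v : E}
    {β p q : ℝ} (hβ : 0 ≤ β) (he : e = β • w - p • u - q • v) :
    ‖A e + p • B u + q • C v‖ ≤
      β * ‖A w‖ + |p| * (‖B - A‖ * ‖u‖) + |q| * (‖C - A‖ * ‖v‖) := by
  have h : A e + p • B u + q • C v = β • A w + p • (B - A) u + q • (C - A) v := by
    simp only [he, map_sub, map_smul, sub_apply]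
    module
  rw [h]
  refine norm_add₃_le.trans ?_
  rw [norm_smul, norm_smul, norm_smul, Real.norm_of_nonneg hβ, Real.norm_eq_abs, Real.norm_eq_abs]
  gcongr <;> exact ContinuousLinearMap.le_opNorm _ _

theorem norm_sub_add_smul_sub_add_smul_sub_le {g : E → F} (hg : ContDiff ℝ 2 g) {κ κh : ℝ}
    (hκh : 0 ≤ κh) (hg₁ : ∀ y u : E, ‖fderiv ℝ g y u‖ ≤ κ * ‖u‖)
    (hg₂ : ∀ y u v : E, ‖fderiv ℝ (fderiv ℝ g) y u v‖ ≤ κh * ‖u‖ * ‖v‖)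
    {x₃ x₂ x₁ x₀ w : E} {β p q : ℝ} (hβ : 0 ≤ β)
    (hx₀ : x₀ - x₁ = β • w - p • (x₁ - x₂) - q • (x₂ - x₃)) :
    ‖(g x₀ - g x₁) + p • (g x₁ - g x₂) + q • (g x₂ - g x₃)‖ ≤ κ * β * ‖w‖ +
      κh * (‖x₀ - x₁‖ + ‖x₁ - x₂‖) * |p| * ‖x₁ - x₂‖ +
      κh * (‖x₂ - x₃‖ + 2 * ‖x₁ - x₂‖ + ‖x₀ - x₁‖) * |q| * ‖x₂ - x₃‖ := by
  have hlip := norm_fderiv_sub_le_of_norm_fderiv_fderiv_le hg hκh hg₂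
  convert norm_sum_smul_sub_le_of_norm_fderiv_le Finset.univ (hg.differentiable two_ne_zero)
    ![1, p, q] ![x₁, x₂, x₃] ![x₀, x₁, x₂] ?_ using 2
  · simp [Fin.sum_univ_three]
  intro t ht
  simp only [Fin.sum_univ_three, Matrix.cons_val, one_smul]
  set A := fderiv ℝ g (lineMap x₁ x₀ t)
  have hB : ‖fderiv ℝ g (lineMap x₂ x₁ t) - A‖ ≤ κh * (‖x₀ - x₁‖ + ‖x₁ - x₂‖) := by
    refine (hlip _ _).trans (mul_le_mul_of_nonneg_left ?_ hκh)
    have := norm_lineMap_sub_lineMap_le x₂ x₁ x₁ x₀ ht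
    rw [norm_sub_rev x₂ x₁, norm_sub_rev x₁ x₀] at this
    linarith
  have hC : ‖fderiv ℝ g (lineMap x₃ x₂ t) - A‖ ≤
      κh * (‖x₂ - x₃‖ + 2 * ‖x₁ - x₂‖ + ‖x₀ - x₁‖) := by
    refine (hlip _ _).trans (mul_le_mul_of_nonneg_left ?_ hκh)
    have := norm_lineMap_sub_lineMap_le x₃ x₂ x₁ x₀ ht
    have h₃₁ := norm_sub_le_norm_sub_add_norm_sub x₁ x₂ x₃
    have h₀₂ := norm_sub_le_norm_sub_add_norm_sub x₀ x₁ x₂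
    rw [norm_sub_rev x₃ x₁, norm_sub_rev x₂ x₀] at this
    linarith
  calc _ ≤ β * ‖A w‖ + |p| * (‖fderiv ℝ g (lineMap x₂ x₁ t) - A‖ * ‖x₁ - x₂‖) +
        |q| * (‖fderiv ℝ g (lineMap x₃ x₂ t) - A‖ * ‖x₂ - x₃‖) :=
        norm_apply_add_smul_apply_add_smul_apply_le _ _ _ hβ hx₀
    _ ≤ β * (κ * ‖w‖) + |p| * (κh * (‖x₀ - x₁‖ + ‖x₁ - x₂‖) * ‖x₁ - x₂‖) +
        |q| * (κh * (‖x₂ - x₃‖ + 2 * ‖x₁ - x₂‖ + ‖x₀ - x₁‖) * ‖x₂ - x₃‖) := by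
        gcongr; exact hg₁ _ _
    _ = _ := by ring

end

theorem stmt_17_general {X : Type*} [NormedAddCommGroup X] [InnerProductSpace ℝ X]
    (g : X → X) (κ κh : ℝ) (hκh : 0 < κh)
    (hC2 : ContDiff ℝ 2 g)
    (hg1 : ∀ y u : X, ‖fderiv ℝ g y u‖ ≤ κ * ‖u‖)
    (hg2 : ∀ y u v : X, ‖fderiv ℝ (fderiv ℝ g) y u v‖ ≤ κh * ‖u‖ * ‖v‖)
    (xkm3 xkm2 xkm1 : X)
    (wkm2 wkm1 wk : X)
    (hwkm2 : wkm2 = g xkm3 - xkm3)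
    (hwkm1 : wkm1 = g xkm2 - xkm2)
    (hwk : wk = g xkm1 - xkm1)
    (hwk0 : wk ≠ 0)
    (a3 a2 a1 : ℝ) (hsum : a3 + a2 + a1 = 1)
    (wa : X) (hwa : wa = a3 • wkm2 + a2 • wkm1 + a1 • wk)
    (θ : ℝ) (hθ : θ = ‖wa‖ / ‖wk‖)
    (β : ℝ) (hβ0 : 0 < β) (hβ1 : β ≤ 1)
    (xk : X)
    (hxk : xk = (1 - β) • (a3 • xkm3 + a2 • xkm2 + a1 • xkm1) +
      β • (a3 • g xkm3 + a2 • g xkm2 + a1 • g xkm1))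
    (wk1 : X) (hwk1 : wk1 = g xk - xk) :
    ‖wk1‖ ≤ θ * ((1 - β) + κ * β) * ‖wk‖ +
      κh * (‖xk - xkm1‖ + ‖xkm1 - xkm2‖) * |1 - a1| * ‖xkm1 - xkm2‖ +
      κh * (‖xkm2 - xkm3‖ + 2 * ‖xkm1 - xkm2‖ + ‖xk - xkm1‖) * |a3| * ‖xkm2 - xkm3‖ := by
  obtain rfl : a2 = 1 - a3 - a1 := by linarith
  have hstep : xk - xkm1 = β • wa - (1 - a1) • (xkm1 - xkm2) - a3 • (xkm2 - xkm3) := by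
    rw [hxk, hwa, hwkm2, hwkm1, hwk]
    module
  have hres : wk1 = (1 - β) • wa +
      ((g xk - g xkm1) + (1 - a1) • (g xkm1 - g xkm2) + a3 • (g xkm2 - g xkm3)) := by
    rw [hwk1, hwa, hwkm2, hwkm1, hwk, hxk]
    module
  have hθwk : θ * ((1 - β) + κ * β) * ‖wk‖ = ((1 - β) + κ * β) * ‖wa‖ := by
    rw [hθ]
    field_simp [norm_ne_zero_iff.mpr hwk0]
  have hincr := norm_sub_add_smul_sub_add_smul_sub_le hC2 hκh.le hg1 hg2 hβ0.le hstep
  calc ‖wk1‖ ≤ (1 - β) * ‖wa‖ +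
        ‖(g xk - g xkm1) + (1 - a1) • (g xkm1 - g xkm2) + a3 • (g xkm2 - g xkm3)‖ := by
        rw [hres]
        refine (norm_add_le _ _).trans_eq ?_
        rw [norm_smul, Real.norm_of_nonneg (sub_nonneg.2 hβ1)]
    _ ≤ _ := by
        rw [hθwk]
        linarith

/-- one step of depth `m = 2` damped Anderson acceleration satisfies
`‖w_{k+1}‖ ≤ θ_k ((1-β) + κβ) ‖w_k‖ + κ̂ (‖e_k‖ + ‖e_{k-1}‖) |γ_{k-1}| ‖e_{k-1}‖
  + κ̂ (‖e_{k-2}‖ + 2‖e_{k-1}‖ + ‖e_k‖) |γ_{k-2}| ‖e_{k-2}‖`,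
with `γ_{k-2} = α_{k-3}` and `γ_{k-1} = 1 - α_{k-1}`. Here `a3, a2, a1` stand for
`α_{k-3}, α_{k-2}, α_{k-1}` and `xkm3, xkm2, xkm1` for `x_{k-3}, x_{k-2}, x_{k-1}`. -/
theorem stmt_17 {X : Type*} [NormedAddCommGroup X] [InnerProductSpace ℝ X] [CompleteSpace X]
    (g : X → X) (κ κh : ℝ) (hκ : 0 < κ) (hκh : 0 < κh)
    (hC2 : ContDiff ℝ 2 g)
    (hg1 : ∀ y u : X, ‖fderiv ℝ g y u‖ ≤ κ * ‖u‖)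
    (hg2 : ∀ y u v : X, ‖fderiv ℝ (fderiv ℝ g) y u v‖ ≤ κh * ‖u‖ * ‖v‖)
    (xkm3 xkm2 xkm1 : X)
    (wkm2 wkm1 wk : X)
    (hwkm2 : wkm2 = g xkm3 - xkm3)
    (hwkm1 : wkm1 = g xkm2 - xkm2)
    (hwk : wk = g xkm1 - xkm1)
    (hwk0 : wk ≠ 0)
    (a3 a2 a1 : ℝ) (hsum : a3 + a2 + a1 = 1)
    (hmin : ∀ b3 b2 b1 : ℝ, b3 + b2 + b1 = 1 →
      ‖a3 • wkm2 + a2 • wkm1 + a1 • wk‖ ≤ ‖b3 • wkm2 + b2 • wkm1 + b1 • wk‖)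
    (wa : X) (hwa : wa = a3 • wkm2 + a2 • wkm1 + a1 • wk)
    (θ : ℝ) (hθ : θ = ‖wa‖ / ‖wk‖)
    (β : ℝ) (hβ0 : 0 < β) (hβ1 : β ≤ 1)
    (xk : X)
    (hxk : xk = (1 - β) • (a3 • xkm3 + a2 • xkm2 + a1 • xkm1) +
      β • (a3 • g xkm3 + a2 • g xkm2 + a1 • g xkm1))
    (wk1 : X) (hwk1 : wk1 = g xk - xk) :
    ‖wk1‖ ≤ θ * ((1 - β) + κ * β) * ‖wk‖ +
      κh * (‖xk - xkm1‖ + ‖xkm1 - xkm2‖) * |1 - a1| * ‖xkm1 - xkm2‖ +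
      κh * (‖xkm2 - xkm3‖ + 2 * ‖xkm1 - xkm2‖ + ‖xk - xkm1‖) * |a3| * ‖xkm2 - xkm3‖ :=
  stmt_17_general g κ κh hκh hC2 hg1 hg2 xkm3 xkm2 xkm1 wkm2 wkm1 wk hwkm2 hwkm1 hwk hwk0 a3 a2 a1
    hsum wa hwa θ hθ β hβ0 hβ1 xk hxk wk1 hwk1
end

section
/- For all κ, κ̂, M, c with 0 < κ < 1, κ̂ > 0, M > 0, c > 0, there exists a constant C = C(κ, κ̂, M, c) > 0 with the following property. Let X be a real Hilbert space, g : X → X twice continuously Fréchet differentiable with ‖g′(y; u)‖ ≤ κ‖u‖ and ‖g″(y; u, v)‖ ≤ κ̂‖u‖‖v‖ for all y, u, v, and a κ-contraction. Let (x_k) be any sequence generated by Anderson acceleration of depth m = 2 with damping factors 0 < β_k ≤ 1 (i.e., at each step k the coefficients (α^k_{k−3}, α^k_{k−2}, α^k_{k−1}) minimize ‖Σ_{j=k−3}^{k−1} α_j w_{j+1}‖ subject to Σ α_j = 1, and x_k = (1−β_{k−1}) Σ_j α^k_j x_j + β_{k−1} Σ_j α^k_j g(x_j)), with residuals w_n :=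 g(x_{n−1}) − x_{n−1} all nonzero and consecutive residual differences nonzero. If at step k the optimization coefficients at levels k and k+1 are all bounded in absolute value by M, and |α^k_{k−1}| ≥ c, |α^{k+1}_k| ≥ c, and |1 − α^k_{k−3}| ≥ c, then ‖w_{k+1}‖ ≤ θ_k ( (1 − β_{k−1}) + κ β_{k−1} ) ‖w_k‖ + C ( ‖w_k‖² + ‖w_{k−1}‖² + ‖w_{k−2}‖² ), where θ_k := ‖Σ_{j=k−3}^{k−1} α^k_j w_{j+1}‖ / ‖w_k‖ is the stage-k optimization gain. -/
/-!
Put `x̄ = ∑ α_j x_j` and `r = ∑ α_j w_{j+1}`; then `x_k = x̄ + β r`, and linearizing `g` at `x̄`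
gives `w_{k+1} = (1 - β) r + g'(x̄)(β r) + ρ₁ - ρ₂`, where `ρ₁` is the Taylor remainder of `g`
between `x̄` and `x_k` and `ρ₂ = ∑ α_j g(x_j) - g(x̄)` is the remainder of the affine combination
(the first-order terms of `ρ₂` cancel because `∑ α_j = 1`). The linear part is at most
`((1 - β) + κ β) ‖r‖`. Optimality of `α` against the plain step gives `‖r‖ ≤ ‖w_k‖`, so
`‖ρ₁‖ = O(‖w_k‖²)`, while `‖ρ₂‖ = O(max_j ‖x_j - x̄‖²)`. Finally, because `g` is a contraction,
`‖x_n - x_{n-1}‖ ≤ (‖w_{n+1}‖ + ‖w_n‖) / (1 - κ)`, which bounds the spread of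
`x_{k-3}, x_{k-2}, x_{k-1}` by the last three residuals.
-/

open Finset

section Taylor

variable {E F : Type*} [NormedAddCommGroup E] [NormedSpace ℝ E]
  [NormedAddCommGroup F] [NormedSpace ℝ F] {g : E → F} {κh : ℝ}

theorem norm_fderiv_sub_fderiv_le (hκh : 0 ≤ κh) (hg : ContDiff ℝ 2 g)
    (hg2 : ∀ y u v : E, ‖fderiv ℝ (fderiv ℝ g) y u v‖ ≤ κh * ‖u‖ * ‖v‖) (x y : E) :
    ‖fderiv ℝ g y - fderiv ℝ g x‖ ≤ κh * ‖y - x‖ := by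
  have hdiff : Differentiable ℝ (fderiv ℝ g) :=
    (hg.fderiv_right (m := 1) le_rfl).differentiable one_ne_zero
  have hbound (z : E) : ‖fderiv ℝ (fderiv ℝ g) z‖ ≤ κh :=
    ContinuousLinearMap.opNorm_le_bound _ hκh fun u =>
      ContinuousLinearMap.opNorm_le_bound _ (by positivity) (hg2 z u)
  exact convex_univ.norm_image_sub_le_of_norm_fderiv_le (fun z _ => hdiff z)
    (fun z _ => hbound z) (Set.mem_univ x) (Set.mem_univ y)

theorem norm_sub_sub_fderiv_le_sq (hκh : 0 ≤ κh) (hg : ContDiff ℝ 2 g)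
    (hg2 : ∀ y u v : E, ‖fderiv ℝ (fderiv ℝ g) y u v‖ ≤ κh * ‖u‖ * ‖v‖) (x y : E) :
    ‖g y - g x - fderiv ℝ g x (y - x)‖ ≤ κh * ‖y - x‖ ^ 2 := by
  have hbound : ∀ z ∈ Metric.closedBall x ‖y - x‖, ‖fderiv ℝ g z - fderiv ℝ g x‖ ≤ κh * ‖y - x‖ :=
    fun z hz => (norm_fderiv_sub_fderiv_le hκh hg hg2 x z).trans <| by
      gcongr; rwa [← dist_eq_norm]
  rw [sq, ← mul_assoc]
  exact (convex_closedBall x ‖y - x‖).norm_image_sub_le_of_norm_fderiv_le'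
    (fun z _ => (hg.differentiable two_ne_zero) z) hbound
    (Metric.mem_closedBall_self (norm_nonneg _)) (by rw [Metric.mem_closedBall, dist_eq_norm])

end Taylor

section AffineCombination

variable {ι E F : Type*} [NormedAddCommGroup E] [NormedSpace ℝ E]
  [NormedAddCommGroup F] [NormedSpace ℝ F] {s : Finset ι} {a : ι → ℝ} {p : ι → E}

theorem norm_sum_smul_apply_sub_apply_sum_le {g : E → F} {κh : ℝ} (ha : ∑ i ∈ s, a i = 1)
    (hT : ∀ x y, ‖g y - g x - fderiv ℝ g x (y - x)‖ ≤ κh * ‖y - x‖ ^ 2) :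
    ‖∑ i ∈ s, a i • g (p i) - g (∑ i ∈ s, a i • p i)‖ ≤
      κh * ∑ i ∈ s, |a i| * ‖p i - ∑ j ∈ s, a j • p j‖ ^ 2 := by
  set z := ∑ i ∈ s, a i • p i
  set L := fderiv ℝ g z
  have hlin : ∑ i ∈ s, a i • L (p i - z) = 0 := by
    simp only [← map_smul, ← map_sum, smul_sub, sum_sub_distrib, ← sum_smul, ha, one_smul,
      sub_self, map_zero, z]
  have hsplit : ∑ i ∈ s, a i • g (p i) - g z = ∑ i ∈ s, a i • (g (p i) - g z - L (p i - z)) := by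
    simp only [smul_sub, sum_sub_distrib, hlin, ← sum_smul, ha, one_smul, sub_zero]
  rw [hsplit, mul_sum]
  refine (norm_sum_le _ _).trans (sum_le_sum fun i _ => ?_)
  rw [norm_smul, Real.norm_eq_abs, mul_left_comm]
  exact mul_le_mul_of_nonneg_left (hT z (p i)) (abs_nonneg _)

theorem sum_abs_mul_norm_sub_sum_sq_le {c : E} {M R : ℝ} (ha : ∑ i ∈ s, a i = 1)
    (hM : ∀ i ∈ s, |a i| ≤ M) (hR : ∀ i ∈ s, ‖p i - c‖ ≤ R) :
    ∑ i ∈ s, |a i| * ‖p i - ∑ j ∈ s, a j • p j‖ ^ 2 ≤ #s * M * ((1 + #s * M) * R) ^ 2 := by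
  set A := ∑ i ∈ s, |a i|
  have hA : A ≤ #s * M := by simpa using sum_le_card_nsmul s _ M hM
  have hcenter : ∑ j ∈ s, a j • p j - c = ∑ j ∈ s, a j • (p j - c) := by
    simp only [smul_sub, sum_sub_distrib, ← sum_smul, ha, one_smul]
  have hspread : ‖∑ j ∈ s, a j • (p j - c)‖ ≤ A * R := by
    rw [sum_mul]
    refine (norm_sum_le _ _).trans (sum_le_sum fun j hj => ?_)
    rw [norm_smul, Real.norm_eq_abs]
    exact mul_le_mul_of_nonneg_left (hR j hj) (abs_nonneg _)
  have hdist : ∀ i ∈ s, ‖p i - ∑ j ∈ s, a j • p j‖ ≤ (1 + #s * M) * R := fun i hi =>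
    calc ‖p i - ∑ j ∈ s, a j • p j‖ = ‖(p i - c) - (∑ j ∈ s, a j • p j - c)‖ := by
          rw [sub_sub_sub_cancel_right]
      _ ≤ ‖p i - c‖ + A * R := by rw [hcenter]; exact (norm_sub_le _ _).trans (by gcongr)
      _ ≤ (1 + #s * M) * R := by
          nlinarith [hR i hi, (norm_nonneg _).trans (hR i hi)]
  calc ∑ i ∈ s, |a i| * ‖p i - ∑ j ∈ s, a j • p j‖ ^ 2
      ≤ ∑ i ∈ s, |a i| * ((1 + #s * M) * R) ^ 2 := sum_le_sum fun i hi => by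
        gcongr
        exact hdist i hi
    _ ≤ #s * M * ((1 + #s * M) * R) ^ 2 := by rw [← sum_mul]; gcongr

theorem norm_anderson_update_residual_le {g : E → E} {κ κh β : ℝ} (hκh : 0 ≤ κh)
    (hβ0 : 0 ≤ β) (hβ1 : β ≤ 1) (ha : ∑ i ∈ s, a i = 1)
    (hg1 : ∀ y u : E, ‖fderiv ℝ g y u‖ ≤ κ * ‖u‖)
    (hT : ∀ x y, ‖g y - g x - fderiv ℝ g x (y - x)‖ ≤ κh * ‖y - x‖ ^ 2) :
    ‖g ((1 - β) • ∑ i ∈ s, a i • p i + β • ∑ i ∈ s, a i • g (p i)) -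
        ((1 - β) • ∑ i ∈ s, a i • p i + β • ∑ i ∈ s, a i • g (p i))‖ ≤
      ((1 - β) + κ * β) * ‖∑ i ∈ s, a i • (g (p i) - p i)‖ +
        κh * ‖∑ i ∈ s, a i • (g (p i) - p i)‖ ^ 2 +
        κh * ∑ i ∈ s, |a i| * ‖p i - ∑ j ∈ s, a j • p j‖ ^ 2 := by
  set z := ∑ i ∈ s, a i • p i
  set r := ∑ i ∈ s, a i • (g (p i) - p i)
  set L := fderiv ℝ g z
  have hgz : ∑ i ∈ s, a i • g (p i) = z + r := by
    simp only [r, z, smul_sub, sum_sub_distrib]; abel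
  set x' := (1 - β) • z + β • ∑ i ∈ s, a i • g (p i)
  have hx' : x' = z + β • r := by simp only [x', hgz]; module
  have hsplit : g x' - x' = ((1 - β) • r + L (β • r)) + (g x' - g z - L (x' - z)) -
      (∑ i ∈ s, a i • g (p i) - g z) := by
    calc g x' - x' = g x' - (z + β • r) := by rw [← hx']
      _ = _ := by rw [hgz, hx', add_sub_cancel_left]; module
  have hlin : ‖(1 - β) • r + L (β • r)‖ ≤ ((1 - β) + κ * β) * ‖r‖ := by
    refine (norm_add_le _ _).trans ?_
    have hL : ‖L (β • r)‖ ≤ κ * (β * ‖r‖) := by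
      simpa [norm_smul, abs_of_nonneg hβ0] using hg1 z (β • r)
    rw [norm_smul, Real.norm_eq_abs, abs_of_nonneg (sub_nonneg.2 hβ1)]
    linarith
  have hquad : ‖g x' - g z - L (x' - z)‖ ≤ κh * ‖r‖ ^ 2 := by
    refine (hT z x').trans ?_
    rw [hx', add_sub_cancel_left, norm_smul, Real.norm_eq_abs, abs_of_nonneg hβ0]
    gcongr
    exact mul_le_of_le_one_left (norm_nonneg _) hβ1
  have hrem := norm_sum_smul_apply_sub_apply_sum_le (p := p) ha hT
  rw [hsplit]
  refine (norm_sub_le _ _).trans ?_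
  linarith [norm_add_le ((1 - β) • r + L (β • r)) (g x' - g z - L (x' - z))]

end AffineCombination

section Contraction

variable {X : Type*} [NormedAddCommGroup X] {g : X → X} {κ : ℝ}

theorem norm_sub_le_of_contracting (hκ0 : 0 ≤ κ) (hκ1 : κ < 1)
    (hg : ∀ x y : X, ‖g y - g x‖ ≤ κ * ‖x - y‖) (x y : X) :
    ‖x - y‖ ≤ (‖g x - x‖ + ‖g y - y‖) / (1 - κ) := by
  have hcontr : ContractingWith κ.toNNReal g := by
    refine ⟨by simpa using hκ1, LipschitzWith.of_dist_le_mul fun y z => ?_⟩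
    simpa [dist_eq_norm, norm_sub_rev, hκ0] using hg z y
  simpa [dist_eq_norm, norm_sub_rev, hκ0] using hcontr.dist_inequality x y

theorem norm_sub_middle_le_of_residuals (hκ0 : 0 ≤ κ) (hκ1 : κ < 1)
    (hg : ∀ x y : X, ‖g y - g x‖ ≤ κ * ‖x - y‖) {x w : ℤ → X}
    (hw : ∀ n, w n = g (x (n - 1)) - x (n - 1)) (k : ℤ) :
    ∀ j ∈ Icc (k - 3) (k - 1),
      ‖x j - x (k - 2)‖ ≤ (‖w k‖ + ‖w (k - 1)‖ + ‖w (k - 2)‖) / (1 - κ) := by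
  have hconsec (n : ℤ) : ‖x n - x (n + 1)‖ ≤ (‖w (n + 1)‖ + ‖w (n + 2)‖) / (1 - κ) := by
    rw [hw, hw, add_sub_cancel_right, show n + 2 - 1 = n + 1 by ring]
    exact norm_sub_le_of_contracting hκ0 hκ1 hg (x n) (x (n + 1))
  have h1κ : 0 < 1 - κ := sub_pos.2 hκ1
  intro j hj
  obtain rfl | rfl | rfl : j = k - 3 ∨ j = k - 2 ∨ j = k - 1 := by
    simp only [mem_Icc] at hj; omega
  · have h := hconsec (k - 3)
    rw [show k - 3 + 1 = k - 2 by ring, show k - 3 + 2 = k - 1 by ring] at h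
    exact h.trans (div_le_div_of_nonneg_right (by linarith [norm_nonneg (w k)]) h1κ.le)
  · rw [sub_self, norm_zero]; positivity
  · have h := hconsec (k - 2)
    rw [show k - 2 + 1 = k - 1 by ring, show k - 2 + 2 = k by ring, norm_sub_rev] at h
    exact h.trans (div_le_div_of_nonneg_right (by linarith [norm_nonneg (w (k - 2))]) h1κ.le)

end Contraction

theorem stmt_18_general (κ κh M c : ℝ) (hκ0 : 0 < κ) (hκ1 : κ < 1)
    (hκh : 0 < κh) (hM : 0 < M) :
    ∃ C : ℝ, 0 < C ∧
      ∀ (X : Type) [NormedAddCommGroup X] [InnerProductSpace ℝ X] [CompleteSpace X],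
      ∀ g : X → X,
        ContDiff ℝ 2 g →
        (∀ y u : X, ‖fderiv ℝ g y u‖ ≤ κ * ‖u‖) →
        (∀ y u v : X, ‖fderiv ℝ (fderiv ℝ g) y u v‖ ≤ κh * ‖u‖ * ‖v‖) →
        (∀ x y : X, ‖g y - g x‖ ≤ κ * ‖x - y‖) →
        ∀ (x w : ℤ → X) (α : ℤ → ℤ → ℝ) (β : ℤ → ℝ),
        (∀ n, w n = g (x (n - 1)) - x (n - 1)) →
        (∀ i, 0 < β i ∧ β i ≤ 1) →
        (∀ i, ∑ j ∈ Finset.Icc (i - 3) (i - 1), α i j = 1) →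
        (∀ (i : ℤ) (b : ℤ → ℝ), ∑ j ∈ Finset.Icc (i - 3) (i - 1), b j = 1 →
          ‖∑ j ∈ Finset.Icc (i - 3) (i - 1), α i j • w (j + 1)‖ ≤
            ‖∑ j ∈ Finset.Icc (i - 3) (i - 1), b j • w (j + 1)‖) →
        (∀ i, x i = (1 - β (i - 1)) • ∑ j ∈ Finset.Icc (i - 3) (i - 1), α i j • x j +
          β (i - 1) • ∑ j ∈ Finset.Icc (i - 3) (i - 1), α i j • g (x j)) →
        (∀ n, w n ≠ 0) →
        (∀ n, w n ≠ w (n - 1)) →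
        ∀ k : ℤ,
        (∀ j ∈ Finset.Icc (k - 3) (k - 1), |α k j| ≤ M) →
        (∀ j ∈ Finset.Icc (k - 2) k, |α (k + 1) j| ≤ M) →
        c ≤ |α k (k - 1)| →
        c ≤ |α (k + 1) k| →
        c ≤ |1 - α k (k - 3)| →
        ‖w (k + 1)‖ ≤
          (‖∑ j ∈ Finset.Icc (k - 3) (k - 1), α k j • w (j + 1)‖ / ‖w k‖) *
            ((1 - β (k - 1)) + κ * β (k - 1)) * ‖w k‖ +
          C * (‖w k‖ ^ 2 + ‖w (k - 1)‖ ^ 2 + ‖w (k - 2)‖ ^ 2) := by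
  refine ⟨κh * (1 + 9 * M * (1 + 3 * M) ^ 2 / (1 - κ) ^ 2), by positivity, ?_⟩
  intro X _ _ _ g hg hg1 hg2 hcon x w α β hw hβ hα hopt hx hw0 _ k hαM _ _ _ _
  set s := Icc (k - 3) (k - 1)
  set r := ∑ j ∈ s, α k j • w (j + 1)
  set Q := ‖w k‖ ^ 2 + ‖w (k - 1)‖ ^ 2 + ‖w (k - 2)‖ ^ 2
  set R := (‖w k‖ + ‖w (k - 1)‖ + ‖w (k - 2)‖) / (1 - κ)
  have hres (j : ℤ) : g (x j) - x j = w (j + 1) := by rw [hw, add_sub_cancel_right]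
  have hstep := norm_anderson_update_residual_le (s := s) (p := x) hκh.le (hβ (k - 1)).1.le
    (hβ (k - 1)).2 (hα k) hg1 (norm_sub_sub_fderiv_le_sq hκh.le hg hg2)
  rw [← hx k, hres] at hstep
  simp only [hres] at hstep
  have hrQ : ‖r‖ ^ 2 ≤ Q := by
    have hr : ‖r‖ ≤ ‖w k‖ := by
      simpa [ite_smul] using hopt k (fun j => if j = k - 1 then 1 else 0) (by simp)
    nlinarith [norm_nonneg r, sq_nonneg ‖w (k - 1)‖, sq_nonneg ‖w (k - 2)‖]
  have hspread := sum_abs_mul_norm_sub_sum_sq_le (hα k) hαM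
    (norm_sub_middle_le_of_residuals hκ0.le hκ1 hcon hw k)
  have hR : R ^ 2 ≤ 3 * Q / (1 - κ) ^ 2 := by
    rw [div_pow]
    gcongr
    nlinarith [sq_nonneg (‖w k‖ - ‖w (k - 1)‖), sq_nonneg (‖w k‖ - ‖w (k - 2)‖),
      sq_nonneg (‖w (k - 1)‖ - ‖w (k - 2)‖)]
  have hcard : (#s : ℝ) = 3 := by simp [s, Int.card_Icc]
  rw [hcard] at hspread
  rw [div_mul_eq_mul_div, div_mul_cancel₀ _ (norm_ne_zero_iff.2 (hw0 k)), mul_comm (‖r‖)]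
  calc ‖w (k + 1)‖
      ≤ ((1 - β (k - 1)) + κ * β (k - 1)) * ‖r‖ + κh * ‖r‖ ^ 2 +
          κh * (3 * M * ((1 + 3 * M) * R) ^ 2) := by
        linarith [mul_le_mul_of_nonneg_left hspread hκh.le]
    _ ≤ ((1 - β (k - 1)) + κ * β (k - 1)) * ‖r‖ + κh * Q +
          κh * (3 * M * ((1 + 3 * M) ^ 2 * (3 * Q / (1 - κ) ^ 2))) := by
        rw [mul_pow]
        gcongr
    _ = ((1 - β (k - 1)) + κ * β (k - 1)) * ‖r‖ +
          κh * (1 + 9 * M * (1 + 3 * M) ^ 2 / (1 - κ) ^ 2) * Q := by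
        ring

/-- Theorem (convergence of the residual with depth `m = 2`).
For all `κ, κ̂, M, c` with `0 < κ < 1`, `κ̂, M, c > 0` there is a constant `C > 0` such
that for any Anderson(2)-generated sequence (for a `C²`, contractive `g` with
`‖g'‖ ≤ κ`, `‖g''‖ ≤ κ̂`) whose optimization coefficients at levels `k` and `k+1` are
bounded by `M`, with `|α^k_{k-1}|, |α^{k+1}_k|, |1 - α^k_{k-3}| ≥ c`,
`‖w_{k+1}‖ ≤ θ_k ((1-β_{k-1}) + κ β_{k-1}) ‖w_k‖ + C (‖w_k‖² + ‖w_{k-1}‖² + ‖w_{k-2}‖²)`. -/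
theorem stmt_18 (κ κh M c : ℝ) (hκ0 : 0 < κ) (hκ1 : κ < 1)
    (hκh : 0 < κh) (hM : 0 < M) (hc : 0 < c) :
    ∃ C : ℝ, 0 < C ∧
      ∀ (X : Type) [NormedAddCommGroup X] [InnerProductSpace ℝ X] [CompleteSpace X],
      ∀ g : X → X,
        ContDiff ℝ 2 g →
        (∀ y u : X, ‖fderiv ℝ g y u‖ ≤ κ * ‖u‖) →
        (∀ y u v : X, ‖fderiv ℝ (fderiv ℝ g) y u v‖ ≤ κh * ‖u‖ * ‖v‖) →
        (∀ x y : X, ‖g y - g x‖ ≤ κ * ‖x - y‖) →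
        ∀ (x w : ℤ → X) (α : ℤ → ℤ → ℝ) (β : ℤ → ℝ),
        (∀ n, w n = g (x (n - 1)) - x (n - 1)) →
        (∀ i, 0 < β i ∧ β i ≤ 1) →
        (∀ i, ∑ j ∈ Finset.Icc (i - 3) (i - 1), α i j = 1) →
        (∀ (i : ℤ) (b : ℤ → ℝ), ∑ j ∈ Finset.Icc (i - 3) (i - 1), b j = 1 →
          ‖∑ j ∈ Finset.Icc (i - 3) (i - 1), α i j • w (j + 1)‖ ≤
            ‖∑ j ∈ Finset.Icc (i - 3) (i - 1), b j • w (j + 1)‖) →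
        (∀ i, x i = (1 - β (i - 1)) • ∑ j ∈ Finset.Icc (i - 3) (i - 1), α i j • x j +
          β (i - 1) • ∑ j ∈ Finset.Icc (i - 3) (i - 1), α i j • g (x j)) →
        (∀ n, w n ≠ 0) →
        (∀ n, w n ≠ w (n - 1)) →
        ∀ k : ℤ,
        (∀ j ∈ Finset.Icc (k - 3) (k - 1), |α k j| ≤ M) →
        (∀ j ∈ Finset.Icc (k - 2) k, |α (k + 1) j| ≤ M) →
        c ≤ |α k (k - 1)| →
        c ≤ |α (k + 1) k| →
        c ≤ |1 - α k (k - 3)| →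
        ‖w (k + 1)‖ ≤
          (‖∑ j ∈ Finset.Icc (k - 3) (k - 1), α k j • w (j + 1)‖ / ‖w k‖) *
            ((1 - β (k - 1)) + κ * β (k - 1)) * ‖w k‖ +
          C * (‖w k‖ ^ 2 + ‖w (k - 1)‖ ^ 2 + ‖w (k - 2)‖ ^ 2) :=
  stmt_18_general κ κh M c hκ0 hκ1 hκh hM
end
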